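/- Suppose item o is ranked at the k'-th position in agent a_1's preference, with k' ≤ k. Then there exists a balanced policy under which agent a_1 does not receive item o if and only if there exists a balanced policy π such that (i) a_1's turns in π are exactly the first k'−1 turns and the last k−k'+1 turns of the sequence, and (ii) agent a_1 does not receive item o under π. -/

import Mathlib

open Finset
open scoped Classical

/-- The most preferred item of a nonempty finset w.r.t. a linear order
(greater means more preferred). -/
noncomputable def favorite {ι : Type} (L : LinearOrder ι) (S : Finset ι) (h : S.Nonempty) : ι :=
  @Finset.max' ι L S h

/-- Sequential allocation: process the turns in order; at each turn the agent whose
turn it is picks her most preferred item among the items not yet allocated.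
Returns the list of (agent, item) picks, in order. -/
noncomputable def seqAlloc {n : ℕ} {ι : Type} [DecidableEq ι]
    (P : Fin n → LinearOrder ι) : List (Fin n) → Finset ι → List (Fin n × ι)
  | [], _ => []
  | a :: rest, S =>
    if h : S.Nonempty then
      (a, favorite (P a) S h) :: seqAlloc P rest (S.erase (favorite (P a) S h))
    else []

/-- `M` is the outcome of the policy `π`: every item is picked by the agent that
`M` assigns it to. -/
def IsOutcome {n : ℕ} {ι : Type} [Fintype ι] [DecidableEq ι]
    (P : Fin n → LinearOrder ι) (π : List (Fin n)) (M : ι → Fin n) : Prop :=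
  ∀ o : ι, (M o, o) ∈ seqAlloc P π Finset.univ

/-- The set of items that agent `a` picks under the policy `π`. -/
noncomputable def receives {n : ℕ} {ι : Type} [Fintype ι] [DecidableEq ι]
    (P : Fin n → LinearOrder ι) (π : List (Fin n)) (a : Fin n) : Finset ι :=
  Finset.univ.filter (fun o => (a, o) ∈ seqAlloc P π Finset.univ)

/-- An allocation `M` is Pareto optimal if there is no bijection `f` of the items such
that every agent weakly prefers `f o` to `o` for each item `o` she gets, with at least
one strict preference. -/
def ParetoOptimal {n : ℕ} {ι : Type} (P : Fin n → LinearOrder ι) (M : ι → Fin n) : Prop :=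
  ¬ ∃ f : ι ≃ ι, (∀ o : ι, (P (M o)).le o (f o)) ∧ (∃ o : ι, (P (M o)).lt o (f o))

/-- A policy is balanced if every agent has exactly `k` turns. -/
def BalancedPolicy {n : ℕ} (k : ℕ) (π : List (Fin n)) : Prop :=
  ∀ a : Fin n, π.count a = k

/-- An allocation is balanced if every agent receives exactly `k` items. -/
def BalancedAlloc {n : ℕ} {ι : Type} [Fintype ι] (k : ℕ) (M : ι → Fin n) : Prop :=
  ∀ a : Fin n, (Finset.univ.filter (fun o => M o = a)).card = k

/-- A policy is recursively balanced if it splits into `k` consecutive rounds of `n`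
turns each, every agent having exactly one turn in each round. -/
def RecBalanced (n k : ℕ) (π : List (Fin n)) : Prop :=
  ∃ rounds : List (List (Fin n)), rounds.length = k ∧
    (∀ r ∈ rounds, r.length = n ∧ ∀ a : Fin n, r.count a = 1) ∧
    π = rounds.flatten

/-- A strict alternation policy: every one of the `k` rounds uses the same order `σ`
over the agents. -/
def StrictAlt (n k : ℕ) (π : List (Fin n)) : Prop :=
  ∃ σ : List (Fin n), σ.length = n ∧ (∀ a : Fin n, σ.count a = 1) ∧
    π = (List.replicate k σ).flatten

/-- A balanced alternation policy: odd-numbered rounds use the order `σ` over the agents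
and even-numbered rounds use its reverse. -/
def BalAlt (n k : ℕ) (π : List (Fin n)) : Prop :=
  ∃ σ : List (Fin n), σ.length = n ∧ (∀ a : Fin n, σ.count a = 1) ∧
    π = ((List.range k).map (fun r => if r % 2 = 0 then σ else σ.reverse)).flatten

/-- `p j i` (for `1 ≤ i ≤ k`) is the item ranked `i`-th by agent `j` among the items `M`
allocates to `j`: it is allocated to `j`, and exactly `i - 1` of the items allocated
to `j` are strictly preferred to it by agent `j`. -/
def IsRankingOf {n : ℕ} {ι : Type} [Fintype ι] (P : Fin n → LinearOrder ι) (k : ℕ)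
    (M : ι → Fin n) (p : Fin n → ℕ → ι) : Prop :=
  ∀ (j : Fin n) (i : ℕ), 1 ≤ i → i ≤ k →
    M (p j i) = j ∧
    (Finset.univ.filter (fun o => M o = j ∧ (P j).lt (p j i) o)).card = i - 1

/-- Condition 3: for all `1 ≤ t < s ≤ k` and all agents `j, j'`, agent `j` strictly
prefers `p j t` to `p j' s`. -/
def Cond3 {n : ℕ} {ι : Type} (P : Fin n → LinearOrder ι) (k : ℕ) (p : Fin n → ℕ → ι) : Prop :=
  ∀ t s : ℕ, 1 ≤ t → t < s → s ≤ k → ∀ j j' : Fin n, (P j).lt (p j' s) (p j t)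

/-- The edge relation of the directed graph `G_M`: for odd `i ≤ k` an edge `a → b`
whenever `b` strictly prefers `p a i` to `p b i`, and for even `i ≤ k` an edge `a → b`
whenever `a` strictly prefers `p b i` to `p a i`. -/
def GM {n : ℕ} {ι : Type} (P : Fin n → LinearOrder ι) (k : ℕ) (p : Fin n → ℕ → ι)
    (a b : Fin n) : Prop :=
  (∃ i : ℕ, 1 ≤ i ∧ i ≤ k ∧ i % 2 = 1 ∧ (P b).lt (p b i) (p a i)) ∨
  (∃ i : ℕ, 1 ≤ i ∧ i ≤ k ∧ i % 2 = 0 ∧ (P a).lt (p a i) (p b i))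

/-- The edge relation of the directed graph `H_M`: for each `i ≤ k` an edge `a → b`
whenever `b` strictly prefers `p a i` to `p b i`. -/
def HM {n : ℕ} {ι : Type} (P : Fin n → LinearOrder ι) (k : ℕ) (p : Fin n → ℕ → ι)
    (a b : Fin n) : Prop :=
  ∃ i : ℕ, 1 ≤ i ∧ i ≤ k ∧ (P b).lt (p b i) (p a i)

/-- The `k` most preferred items of agent `j`: those items with fewer than `k` items
strictly preferred to them by `j`. -/
noncomputable def topItems {n : ℕ} {ι : Type} [Fintype ι] (P : Fin n → LinearOrder ι)
    (k : ℕ) (j : Fin n) : Finset ι :=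
  Finset.univ.filter (fun o => (Finset.univ.filter (fun o' => (P j).lt o o')).card < k)

/-- The rank of item `o` in agent `j`'s preference (the most preferred item has rank 1). -/
noncomputable def rankOf {n : ℕ} {ι : Type} [Fintype ι] (P : Fin n → LinearOrder ι)
    (j : Fin n) (o : ι) : ℕ :=
  (Finset.univ.filter (fun o' => (P j).lt o o')).card + 1

/-!
Take a balanced policy under which `a1` misses `o`, delete `a1`'s turns and give her the first
`k' - 1` and the last `k - k' + 1` turns instead. In her first turns she takes exactly the `k' - 1`
items she prefers to `o`. Before `o` was allocated in the old run, `a1` had only taken such items,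
so when the other agents take their turns in the old order, the pool of the new run is always the
pool of the old run minus a growing set of items that does not contain `o`. Hence `o` is still
allocated before `a1`'s last turns. The converse is trivial.
-/

theorem getElem_replicate_append_append_replicate_eq_iff {α : Type*} {c : α} {l : List α}
    (hc : c ∉ l) {i j t : ℕ} (ht : t < (List.replicate i c ++ (l ++ List.replicate j c)).length) :
    (List.replicate i c ++ (l ++ List.replicate j c))[t] = c ↔ t < i ∨ i + l.length ≤ t := by
  rw [List.getElem_append]
  split_ifs with hi
  · simp only [List.length_replicate] at hi
    simp [hi]
  · rw [List.getElem_append]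
    split_ifs with hl
    · simp only [List.length_replicate] at hi hl
      refine iff_of_false (fun h => hc (h ▸ List.getElem_mem _)) ?_
      omega
    · simp only [List.length_replicate] at hi hl
      simp only [List.getElem_replicate, true_iff]
      omega

section SequentialAllocation

variable {n : ℕ} {ι : Type}

theorem favorite_mem {L : LinearOrder ι} {S : Finset ι} (h : S.Nonempty) :
    favorite L S h ∈ S :=
  @Finset.max'_mem ι L S h

theorem le_favorite {L : LinearOrder ι} {S : Finset ι} (h : S.Nonempty) {x : ι} (hx : x ∈ S) :
    L.le x (favorite L S h) :=
  @Finset.le_max' ι L S x hx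

theorem favorite_mem_or_eq_favorite_sdiff {L : LinearOrder ι} [DecidableEq ι] {S W : Finset ι}
    (hS : S.Nonempty) (hSW : (S \ W).Nonempty) :
    favorite L S hS ∈ W ∨ favorite L S hS = favorite L (S \ W) hSW := by
  let := L
  refine or_iff_not_imp_left.2 fun hW => le_antisymm ?_ ?_
  · exact le_favorite hSW (Finset.mem_sdiff.2 ⟨favorite_mem hS, hW⟩)
  · exact le_favorite hS (Finset.sdiff_subset (favorite_mem hSW))

variable [DecidableEq ι] (P : Fin n → LinearOrder ι)

noncomputable def remaining : List (Fin n) → Finset ι → Finset ι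
  | [], S => S
  | a :: rest, S =>
    if h : S.Nonempty then remaining rest (S.erase (favorite (P a) S h)) else S

@[simp]
theorem remaining_empty (σ : List (Fin n)) : remaining P σ (∅ : Finset ι) = ∅ := by
  cases σ <;> simp [remaining]

@[simp]
theorem seqAlloc_empty (σ : List (Fin n)) : seqAlloc P σ (∅ : Finset ι) = [] := by
  cases σ <;> simp [seqAlloc]

theorem remaining_subset (σ : List (Fin n)) (S : Finset ι) : remaining P σ S ⊆ S := by
  induction σ generalizing S with
  | nil => exact Finset.Subset.refl S
  | cons a rest ih =>
    rw [remaining]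
    split
    · exact (ih _).trans (Finset.erase_subset _ _)
    · exact Finset.Subset.refl S

theorem remaining_eq_empty_of_card_le {σ : List (Fin n)} {S : Finset ι} (h : S.card ≤ σ.length) :
    remaining P σ S = ∅ := by
  induction σ generalizing S with
  | nil => exact Finset.card_eq_zero.1 (Nat.le_zero.1 h)
  | cons a rest ih =>
    rw [remaining]
    split
    next hS =>
      apply ih
      rw [Finset.card_erase_of_mem (favorite_mem hS)]
      simp only [List.length_cons] at h
      omega
    next hS => exact Finset.not_nonempty_iff_eq_empty.1 hS

theorem seqAlloc_append (α β : List (Fin n)) (S : Finset ι) :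
    seqAlloc P (α ++ β) S = seqAlloc P α S ++ seqAlloc P β (remaining P α S) := by
  induction α generalizing S with
  | nil => rfl
  | cons a rest ih =>
    by_cases hS : S.Nonempty
    · simp only [List.cons_append, seqAlloc, remaining, dif_pos hS, ih, List.cons_append]
    · obtain rfl := Finset.not_nonempty_iff_eq_empty.1 hS
      simp

theorem fst_mem_of_mem_seqAlloc {σ : List (Fin n)} {S : Finset ι} {p : Fin n × ι}
    (hp : p ∈ seqAlloc P σ S) : p.1 ∈ σ := by
  induction σ generalizing S with
  | nil => simp [seqAlloc] at hp
  | cons a rest ih =>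
    rw [seqAlloc] at hp
    split at hp
    · rcases List.mem_cons.1 hp with rfl | h
      · exact List.mem_cons_self
      · exact List.mem_cons_of_mem _ (ih h)
    · simp at hp

theorem snd_mem_sdiff_remaining_of_mem_seqAlloc {σ : List (Fin n)} {S : Finset ι}
    {p : Fin n × ι} (hp : p ∈ seqAlloc P σ S) : p.2 ∈ S \ remaining P σ S := by
  induction σ generalizing S with
  | nil => simp [seqAlloc] at hp
  | cons a rest ih =>
    rw [seqAlloc] at hp
    rw [remaining]
    split at hp
    next hS =>
      rw [dif_pos hS]
      rcases List.mem_cons.1 hp with rfl | h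
      · exact Finset.mem_sdiff.2 ⟨favorite_mem hS, fun hm =>
          Finset.notMem_erase _ _ (remaining_subset P rest _ hm)⟩
      · obtain ⟨h₁, h₂⟩ := Finset.mem_sdiff.1 (ih h)
        exact Finset.mem_sdiff.2 ⟨Finset.mem_of_mem_erase h₁, h₂⟩
    · simp at hp

theorem remaining_replicate {c : Fin n} :
    ∀ {j : ℕ} {S U : Finset ι}, U ⊆ S → U.card = j →
      (∀ u ∈ U, ∀ x ∈ S \ U, (P c).lt x u) → remaining P (List.replicate j c) S = S \ U
  | 0, S, U, _, hU, _ => by simp [Finset.card_eq_zero.1 hU, remaining]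
  | j + 1, S, U, hUS, hU, hsep => by
    have hS : S.Nonempty := (Finset.card_pos.1 (by omega)).mono hUS
    set m := favorite (P c) S hS
    have hmU : m ∈ U := by
      by_contra hm
      obtain ⟨u, hu⟩ := Finset.card_pos.1 (by omega : 0 < U.card)
      let := P c
      exact absurd (le_favorite hS (hUS hu))
        (not_le.2 (hsep u hu m (Finset.mem_sdiff.2 ⟨favorite_mem hS, hm⟩)))
    have hsdiff : S.erase m \ U.erase m = S \ U := by
      ext x
      simp only [Finset.mem_sdiff, Finset.mem_erase]
      constructor
      · rintro ⟨⟨hxm, hxS⟩, hxU⟩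
        exact ⟨hxS, fun h => hxU ⟨hxm, h⟩⟩
      · rintro ⟨hxS, hxU⟩
        exact ⟨⟨fun h => hxU (h ▸ hmU), hxS⟩, fun h => hxU h.2⟩
    rw [List.replicate_succ, remaining, dif_pos hS, ← hsdiff]
    refine remaining_replicate (Finset.erase_subset_erase _ hUS) ?_ ?_
    · rw [Finset.card_erase_of_mem hmU, hU, Nat.add_sub_cancel]
    · rw [hsdiff]
      exact fun u hu => hsep u (Finset.mem_of_mem_erase hu)

theorem not_mem_remaining_filter_ne_sdiff {c : Fin n} {o : ι} :
    ∀ {σ : List (Fin n)} {S W : Finset ι}, o ∉ W → (∀ x ∈ S, (P c).lt o x → x ∈ W) →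
      (c, o) ∉ seqAlloc P σ S → o ∉ remaining P σ S →
      o ∉ remaining P (σ.filter (fun x => x ≠ c)) (S \ W)
  | [], _, _, _, _, _, hgone => fun h => hgone (Finset.sdiff_subset h)
  | a :: rest, S, W, hoW, hW, hno, hgone => by
    by_cases hoS : o ∈ S
    swap
    · exact fun h => hoS (Finset.sdiff_subset (remaining_subset P _ _ h))
    have hS : S.Nonempty := ⟨o, hoS⟩
    rw [seqAlloc, dif_pos hS, List.mem_cons, not_or] at hno
    rw [remaining, dif_pos hS] at hgone
    set m := favorite (P a) S hS
    by_cases hac : a = c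
    · subst hac
      have hmW : m ∈ W := by
        let := P a
        refine hW m (favorite_mem hS) (lt_of_le_of_ne (le_favorite hS hoS) ?_)
        rintro rfl
        exact hno.1 rfl
      have hsdiff : S \ W = S.erase m \ W := by
        ext x
        simp only [Finset.mem_sdiff, Finset.mem_erase]
        constructor
        · rintro ⟨hxS, hxW⟩
          exact ⟨⟨fun h => hxW (h ▸ hmW), hxS⟩, hxW⟩
        · rintro ⟨⟨-, hxS⟩, hxW⟩
          exact ⟨hxS, hxW⟩
      rw [List.filter_cons_of_neg (by simp), hsdiff]
      exact not_mem_remaining_filter_ne_sdiff hoW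
        (fun x hx => hW x (Finset.mem_of_mem_erase hx)) hno.2 hgone
    · rw [List.filter_cons_of_pos (by simpa using hac)]
      have hSW : (S \ W).Nonempty := ⟨o, Finset.mem_sdiff.2 ⟨hoS, hoW⟩⟩
      rw [remaining, dif_pos hSW]
      set m' := favorite (P a) (S \ W) hSW
      by_cases hom' : o = m'
      · exact fun h => (Finset.mem_erase.1 (remaining_subset P _ _ h)).1 hom'
      -- withdrawing `m'` as well keeps the two runs in step
      have hsdiff : (S \ W).erase m' = S.erase m \ insert m' W := by
        have hm := favorite_mem_or_eq_favorite_sdiff hS hSW (L := P a)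
        ext x
        simp only [Finset.mem_erase, Finset.mem_sdiff, Finset.mem_insert]
        constructor
        · rintro ⟨hxm', hxS, hxW⟩
          refine ⟨⟨?_, hxS⟩, not_or.2 ⟨hxm', hxW⟩⟩
          rintro rfl
          exact hm.elim hxW hxm'
        · rintro ⟨⟨-, hxS⟩, hx⟩
          exact ⟨fun h => hx (Or.inl h), hxS, fun h => hx (Or.inr h)⟩
      rw [hsdiff]
      refine not_mem_remaining_filter_ne_sdiff ?_
        (fun x hx hox => Finset.mem_insert_of_mem (hW x (Finset.mem_of_mem_erase hx) hox))
        hno.2 hgone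
      exact fun h => (Finset.mem_insert.1 h).elim hom' hoW

theorem BalancedPolicy.replicate_append_filter_ne_append_replicate {k : ℕ} {π : List (Fin n)}
    (hπ : BalancedPolicy k π) (c : Fin n) {i j : ℕ} (hij : i + j = k) :
    BalancedPolicy k (List.replicate i c ++ (π.filter (fun x => x ≠ c) ++ List.replicate j c)) := by
  intro a
  simp only [List.count_append, List.count_replicate]
  by_cases hac : a = c
  · subst hac
    simp [List.count_eq_zero, ← hij]
  · simp [hac, Ne.symm hac, hπ a]

theorem BalancedPolicy.length_eq {k : ℕ} {π : List (Fin n)} (hπ : BalancedPolicy k π) :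
    π.length = n * k := by
  have := Multiset.sum_count_eq_card (s := Finset.univ) (m := (π : Multiset (Fin n))) (by simp)
  simp only [Multiset.coe_count, Multiset.coe_card] at this
  rw [← this, Finset.sum_congr rfl fun a _ => hπ a]
  simp

variable [Fintype ι]

noncomputable def betterThan (c : Fin n) (o : ι) : Finset ι :=
  Finset.univ.filter (fun x => (P c).lt o x)

theorem mem_receives {π : List (Fin n)} {a : Fin n} {o : ι} :
    o ∈ receives P π a ↔ (a, o) ∈ seqAlloc P π Finset.univ := by
  simp [receives]

theorem not_mem_receives_replicate_append {c : Fin n} {o : ι} {ρ τ : List (Fin n)} (hcρ : c ∉ ρ)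
    (hρ : o ∉ remaining P ρ (Finset.univ \ betterThan P c o)) :
    o ∉ receives P (List.replicate (betterThan P c o).card c ++ (ρ ++ τ)) c := by
  let := P c
  have hfirst : remaining P (List.replicate (betterThan P c o).card c) Finset.univ =
      Finset.univ \ betterThan P c o := by
    refine remaining_replicate P (Finset.subset_univ _) rfl fun u hu x hx => ?_
    simp only [betterThan, Finset.mem_sdiff, Finset.mem_filter, Finset.mem_univ, true_and] at hu hx
    exact lt_of_le_of_lt (not_lt.1 hx) hu
  rw [mem_receives, seqAlloc_append, seqAlloc_append, hfirst]
  simp only [List.mem_append, not_or]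
  refine ⟨fun h => ?_, fun h => hcρ (fst_mem_of_mem_seqAlloc P h), fun h => hρ ?_⟩
  · have := snd_mem_sdiff_remaining_of_mem_seqAlloc P h
    rw [hfirst, Finset.sdiff_sdiff_eq_self (Finset.subset_univ _)] at this
    simp [betterThan] at this
  · exact (Finset.mem_sdiff.1 (snd_mem_sdiff_remaining_of_mem_seqAlloc P h)).1

end SequentialAllocation


theorem necessary_item_balanced_normal_form_general
    {ι : Type} [Fintype ι] [DecidableEq ι] {n k : ℕ}
    (hcard : Fintype.card ι = k * n)
    (P : Fin n → LinearOrder ι) (a1 : Fin n) (o : ι)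
    (k' : ℕ) (hk'k : k' ≤ k) (hrank : rankOf P a1 o = k') :
    (∃ π : List (Fin n), BalancedPolicy k π ∧ o ∉ receives P π a1) ↔
      ∃ π : List (Fin n), BalancedPolicy k π ∧
        (∀ (t : ℕ) (ht : t < π.length),
          π.get ⟨t, ht⟩ = a1 ↔ (t < k' - 1 ∨ k * n - (k - k' + 1) ≤ t)) ∧
        o ∉ receives P π a1 := by
  have hbetter : (betterThan P a1 o).card + 1 = k' := hrank
  constructor
  · rintro ⟨π, hπ, hno⟩
    let ρ := π.filter (fun x => x ≠ a1)
    have hgone : o ∉ remaining P π Finset.univ := by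
      rw [remaining_eq_empty_of_card_le P (by rw [Finset.card_univ, hcard, hπ.length_eq, mul_comm])]
      exact Finset.notMem_empty o
    have hρ : o ∉ remaining P ρ (Finset.univ \ betterThan P a1 o) :=
      not_mem_remaining_filter_ne_sdiff P (by simp [betterThan]) (by simp [betterThan])
        ((mem_receives P).not.1 hno) hgone
    have ha1ρ : a1 ∉ ρ := by simp [ρ]
    have hπ' : BalancedPolicy k (List.replicate (k' - 1) a1 ++ (ρ ++ List.replicate (k - k' + 1) a1)) :=
      hπ.replicate_append_filter_ne_append_replicate a1 (by omega)
    refine ⟨_, hπ', fun t ht => ?_, ?_⟩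
    · have hlen := hπ'.length_eq
      simp only [List.length_append, List.length_replicate] at hlen
      have hρlen : k' - 1 + ρ.length = k * n - (k - k' + 1) := by
        rw [Nat.mul_comm k n]
        omega
      rw [List.get_eq_getElem, getElem_replicate_append_append_replicate_eq_iff ha1ρ, hρlen]
    · rw [show k' - 1 = (betterThan P a1 o).card by omega]
      exact not_mem_receives_replicate_append P ha1ρ hρ
  · rintro ⟨π, hπ, -, ho⟩
    exact ⟨π, hπ, ho⟩

/-- If item `o` is ranked `k'`-th (`k' ≤ k`) by agent `a_1`, then some
balanced policy denies `o` to `a_1` iff some balanced policy in which `a_1`'s turns are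
exactly the first `k' - 1` and the last `k - k' + 1` turns denies `o` to `a_1`. -/
theorem necessary_item_balanced_normal_form
    {ι : Type} [Fintype ι] [DecidableEq ι] {n k : ℕ} (hn : 0 < n) (hk : 1 ≤ k)
    (hcard : Fintype.card ι = k * n)
    (P : Fin n → LinearOrder ι) (a1 : Fin n) (o : ι)
    (k' : ℕ) (hk'1 : 1 ≤ k') (hk'k : k' ≤ k) (hrank : rankOf P a1 o = k') :
    (∃ π : List (Fin n), BalancedPolicy k π ∧ o ∉ receives P π a1) ↔
      ∃ π : List (Fin n), BalancedPolicy k π ∧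
        (∀ (t : ℕ) (ht : t < π.length),
          π.get ⟨t, ht⟩ = a1 ↔ (t < k' - 1 ∨ k * n - (k - k' + 1) ≤ t)) ∧
        o ∉ receives P π a1 :=
  necessary_item_balanced_normal_form_general hcard P a1 o k' hk'k hrank
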